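/- The solution z_α to z' = √(W(z)), z(0) = α, taking values in [a,b], is unique if and only if α > a. (For α = a, both the constant function a and the function leaving the well immediately are solutions.) -/

import Mathlib

/-!
For `a < α`, a solution stays in `(a, b]`, and while it is below `b` the travel time
`τ x = ∫ s in a..x, 1 / √(W s)` increases at unit speed along it; once it reaches `b` it stays
there. Comparing right derivatives gives `τ (z t) = min (τ α + t) (τ b)`, and `τ` is strictly
increasing on `[a, b]`, so `z t` is determined by `t`.

For `α = a`, besides the constant `a`, the inverse of `τ` (clamped to `[a, b]`) is a solution: it
reaches `b` at the finite time `τ b` because `1 / √W` is integrable. At the two gluing times `0` and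
`τ b` it is differentiable because `√W ∘ z` is continuous there and is the derivative nearby.
-/

open Real Set Filter Topology MeasureTheory

theorem hasDerivAt_of_eventually_hasDerivAt_of_ne {E : Type*} [NormedAddCommGroup E]
    [NormedSpace ℝ E] {f g : ℝ → E} {x : ℝ}
    (f_diff : ∀ᶠ y in 𝓝[≠] x, HasDerivAt f (g y) y) (hf : ContinuousAt f x)
    (hg : ContinuousAt g x) : HasDerivAt f (g x) x := by
  set s := {y | HasDerivAt f (g y) y}
  have diff : DifferentiableOn ℝ f s := fun y hy => hy.differentiableAt.differentiableWithinAt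
  have deriv_eq : deriv f =ᶠ[𝓝[≠] x] g := f_diff.mono fun y hy => hy.deriv
  have right : HasDerivWithinAt f (g x) (Ici x) x :=
    hasDerivWithinAt_Ici_of_tendsto_deriv diff hf.continuousWithinAt
      (nhdsWithin_mono _ (fun _ hy => ne_of_gt hy) f_diff)
      ((hg.tendsto.mono_left nhdsWithin_le_nhds).congr'
        (deriv_eq.filter_mono (nhdsWithin_mono _ fun _ hy => ne_of_gt hy)).symm)
  have left : HasDerivWithinAt f (g x) (Iic x) x :=
    hasDerivWithinAt_Iic_of_tendsto_deriv diff hf.continuousWithinAt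
      (nhdsWithin_mono _ (fun _ hy => ne_of_lt hy) f_diff)
      ((hg.tendsto.mono_left nhdsWithin_le_nhds).congr'
        (deriv_eq.filter_mono (nhdsWithin_mono _ fun _ hy => ne_of_lt hy)).symm)
  simpa using left.union right

theorem hasDerivAt_of_hasDerivAt_of_notMem_finite {E : Type*} [NormedAddCommGroup E]
    [NormedSpace ℝ E] {f g : ℝ → E} {s : Set ℝ} (hs : s.Finite)
    (f_diff : ∀ y ∉ s, HasDerivAt f (g y) y) (hf : Continuous f) (hg : Continuous g) (x : ℝ) :
    HasDerivAt f (g x) x := by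
  refine hasDerivAt_of_eventually_hasDerivAt_of_ne ?_ hf.continuousAt hg.continuousAt
  have : (s \ {x})ᶜ ∈ 𝓝 x := hs.sdiff.isClosed.compl_mem_nhds (fun h => h.2 rfl)
  filter_upwards [self_mem_nhdsWithin, nhdsWithin_le_nhds this] with y hyx hy
  exact f_diff y fun hys => hy ⟨hys, hyx⟩

theorem StrictMonoOn.exists_continuous_inverse {f : ℝ → ℝ} {a b : ℝ} (hab : a ≤ b)
    (hf : StrictMonoOn f (Icc a b)) (hfc : ContinuousOn f (Icc a b)) :
    ∃ g : ℝ → ℝ, Continuous g ∧ ∀ t, g t ∈ Icc a b ∧ f (g t) = max (f a) (min (f b) t) := by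
  have himg : f '' Icc a b = Icc (f a) (f b) := hfc.image_Icc_of_monotoneOn hab hf.monotoneOn
  have hfab : f a ≤ f b := hf.monotoneOn (left_mem_Icc.2 hab) (right_mem_Icc.2 hab) hab
  set c : ℝ → ℝ := fun t => max (f a) (min (f b) t)
  have hc : ∀ t, c t ∈ f '' Icc a b := fun t => by
    rw [himg]; exact ⟨le_max_left _ _, max_le hfab (min_le_left _ _)⟩
  set g := fun t => Function.invFunOn f (Icc a b) (c t)
  have hg : ∀ t, g t ∈ Icc a b ∧ f (g t) = c t := fun t =>
    ⟨Function.invFunOn_mem (hc t), Function.invFunOn_eq (hc t)⟩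
  set g' : ℝ → Icc a b := fun t => ⟨g t, (hg t).1⟩
  have hmono : Monotone g' := fun s t hst => by
    show g s ≤ g t
    rw [← hf.le_iff_le (hg s).1 (hg t).1, (hg s).2, (hg t).2]
    exact max_le_max le_rfl (min_le_min le_rfl hst)
  have hsurj : Function.Surjective g' := fun x => by
    refine ⟨f x, Subtype.ext (hf.injOn (hg _).1 x.2 ?_)⟩
    obtain ⟨h₁, h₂⟩ : f x ∈ Icc (f a) (f b) := himg ▸ mem_image_of_mem f x.2
    rw [(hg _).2]
    show max _ (min _ _) = _
    rw [min_eq_right h₂, max_eq_right h₁]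
  exact ⟨_, continuous_subtype_val.comp (hmono.continuous_of_surjective hsurj), hg⟩

theorem strictMonoOn_primitive_of_pos {f : ℝ → ℝ} {a b : ℝ} (hf : IntervalIntegrable f volume a b)
    (hpos : ∀ x ∈ Ioo a b, 0 < f x) : StrictMonoOn (fun x => ∫ s in a..x, f s) (Icc a b) := by
  intro x hx y hy hxy
  have hab : a ≤ b := hx.1.trans hx.2
  have hsub : ∀ {u w}, u ∈ Icc a b → w ∈ Icc a b → IntervalIntegrable f volume u w :=
    fun hu hw => hf.mono_set (by rw [uIcc_of_le hab]; exact uIcc_subset_Icc hu hw)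
  have hxy_pos : 0 < ∫ s in x..y, f s :=
    intervalIntegral.intervalIntegral_pos_of_pos_on (hsub hx hy)
      (fun s hs => hpos s ⟨hx.1.trans_lt hs.1, hs.2.trans_le hy.2⟩) hxy
  have := intervalIntegral.integral_add_adjacent_intervals (hsub (left_mem_Icc.2 hab) hx)
    (hsub hx hy)
  linarith

noncomputable def travelTime (v : ℝ → ℝ) (a x : ℝ) : ℝ := ∫ s in a..x, (v s)⁻¹

section travelTime

variable {v : ℝ → ℝ} {a b : ℝ}

@[simp]
theorem travelTime_self (v : ℝ → ℝ) (a : ℝ) : travelTime v a a = 0 :=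
  intervalIntegral.integral_same

theorem travelTime_strictMonoOn (hv_pos : ∀ x ∈ Ioo a b, 0 < v x)
    (hint : IntervalIntegrable (fun s => (v s)⁻¹) volume a b) :
    StrictMonoOn (travelTime v a) (Icc a b) :=
  strictMonoOn_primitive_of_pos hint fun x hx => inv_pos.2 (hv_pos x hx)

theorem travelTime_continuousOn (hab : a ≤ b)
    (hint : IntervalIntegrable (fun s => (v s)⁻¹) volume a b) :
    ContinuousOn (travelTime v a) (Icc a b) := by
  rw [← uIcc_of_le hab]
  exact intervalIntegral.continuousOn_primitive_interval' hint left_mem_uIcc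

theorem hasDerivAt_travelTime (hv : Continuous v)
    (hint : IntervalIntegrable (fun s => (v s)⁻¹) volume a b) {x : ℝ} (hx : x ∈ Ioo a b)
    (hvx : v x ≠ 0) : HasDerivAt (travelTime v a) (v x)⁻¹ x := by
  have hab := (hx.1.trans hx.2).le
  have hsub : uIcc a x ⊆ uIcc a b := by
    rw [uIcc_of_le hab]; exact uIcc_subset_Icc (left_mem_Icc.2 hab) (Ioo_subset_Icc_self hx)
  exact intervalIntegral.integral_hasDerivAt_right (hint.mono_set hsub)
    (hv.measurable.inv.stronglyMeasurable.stronglyMeasurableAtFilter)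
    (hv.continuousAt.inv₀ hvx)

theorem hasDerivAt_of_travelTime_comp_eventuallyEq (hv : Continuous v)
    (hv_pos : ∀ x ∈ Ioo a b, 0 < v x) (hint : IntervalIntegrable (fun s => (v s)⁻¹) volume a b)
    {z : ℝ → ℝ} {t : ℝ} (hz : ContinuousAt z t) (hzt : z t ∈ Ioo a b)
    (hinv : ∀ᶠ s in 𝓝 t, travelTime v a (z s) = s) : HasDerivAt z (v (z t)) t := by
  have hvz := (hv_pos _ hzt).ne'
  simpa using (hasDerivAt_travelTime hv hint hzt hvz).of_local_left_inverse hz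
    (inv_ne_zero hvz) hinv

end travelTime

structure IsSolution (v : ℝ → ℝ) (a b α : ℝ) (z : ℝ → ℝ) : Prop where
  mem : ∀ t ∈ Ici (0 : ℝ), z t ∈ Icc a b
  initial : z 0 = α
  hasDerivWithinAt : ∀ t ∈ Ici (0 : ℝ), HasDerivWithinAt z (v (z t)) (Ici 0) t

namespace IsSolution

variable {v : ℝ → ℝ} {a b α : ℝ} {z : ℝ → ℝ}

theorem continuousOn (hz : IsSolution v a b α z) : ContinuousOn z (Ici 0) :=
  fun t ht => (hz.hasDerivWithinAt t ht).continuousWithinAt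

theorem monotoneOn (hv_nonneg : ∀ x, 0 ≤ v x) (hz : IsSolution v a b α z) :
    MonotoneOn z (Ici 0) :=
  monotoneOn_of_hasDerivWithinAt_nonneg (convex_Ici 0) hz.continuousOn
    (fun t ht => by
      rw [interior_Ici] at ht ⊢
      exact (hz.hasDerivWithinAt t (Ioi_subset_Ici_self ht)).mono Ioi_subset_Ici_self)
    (fun t _ => hv_nonneg _)

theorem eq_right_of_le (hv_nonneg : ∀ x, 0 ≤ v x) (hz : IsSolution v a b α z) {s t : ℝ}
    (hs : 0 ≤ s) (hst : s ≤ t) (hzs : z s = b) : z t = b :=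
  le_antisymm (hz.mem t (hs.trans hst)).2 (hzs ▸ hz.monotoneOn hv_nonneg hs (hs.trans hst) hst)

theorem left_lt (hv_nonneg : ∀ x, 0 ≤ v x) (hz : IsSolution v a b α z) (haα : a < α) {t : ℝ}
    (ht : 0 ≤ t) : a < z t :=
  haα.trans_le (hz.initial ▸ hz.monotoneOn hv_nonneg self_mem_Ici ht ht)

theorem hasDerivWithinAt_travelTime_comp (hv : Continuous v) (hv_nonneg : ∀ x, 0 ≤ v x)
    (hv_pos : ∀ x ∈ Ioo a b, 0 < v x) (hint : IntervalIntegrable (fun s => (v s)⁻¹) volume a b)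
    (hz : IsSolution v a b α z) (haα : a < α) {t : ℝ}
    (ht : 0 ≤ t) (hzt : z t < b) :
    HasDerivWithinAt (fun s => travelTime v a (z s)) 1 (Ici 0) t := by
  have hzt' : z t ∈ Ioo a b := ⟨hz.left_lt hv_nonneg haα ht, hzt⟩
  have hvz := (hv_pos _ hzt').ne'
  have := (hasDerivAt_travelTime hv hint hzt' hvz).comp_hasDerivWithinAt t
    (hz.hasDerivWithinAt t ht)
  rwa [inv_mul_cancel₀ hvz] at this

theorem travelTime_comp_of_lt (hv : Continuous v) (hv_nonneg : ∀ x, 0 ≤ v x)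
    (hv_pos : ∀ x ∈ Ioo a b, 0 < v x) (hint : IntervalIntegrable (fun s => (v s)⁻¹) volume a b)
    (hz : IsSolution v a b α z) (haα : a < α) {t : ℝ} (ht : 0 ≤ t)
    (hzt : z t < b) : travelTime v a (z t) = travelTime v a α + t := by
  have hab : a ≤ b := (hz.mem t ht).1.trans (hz.mem t ht).2
  have hlt : ∀ s ∈ Icc 0 t, z s < b := fun s hs =>
    (hz.monotoneOn hv_nonneg hs.1 ht hs.2).trans_lt hzt
  have hconst := constant_of_has_deriv_right_zero (f := fun s => travelTime v a (z s) - s)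
    (((travelTime_continuousOn hab hint).comp (hz.continuousOn.mono fun s hs => hs.1)
      fun s hs => hz.mem s hs.1).sub continuousOn_id)
    (fun s hs => by
      have := ((hz.hasDerivWithinAt_travelTime_comp hv hv_nonneg hv_pos hint haα hs.1
        (hlt s (Ico_subset_Icc_self hs))).sub (hasDerivWithinAt_id s _)).mono
        (Ici_subset_Ici.2 hs.1)
      rwa [sub_self] at this)
    t ⟨ht, le_rfl⟩
  simp only [hz.initial, sub_zero] at hconst
  linarith

theorem travelTime_comp_le (hv : Continuous v) (hv_nonneg : ∀ x, 0 ≤ v x)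
    (hv_pos : ∀ x ∈ Ioo a b, 0 < v x) (hint : IntervalIntegrable (fun s => (v s)⁻¹) volume a b)
    (hz : IsSolution v a b α z) (haα : a < α) {t : ℝ} (ht : 0 ≤ t) :
    travelTime v a (z t) ≤ travelTime v a α + t := by
  have hab : a ≤ b := (hz.mem t ht).1.trans (hz.mem t ht).2
  refine image_le_of_deriv_right_le_deriv_boundary (f := fun s => travelTime v a (z s))
    (f' := fun s => if z s < b then 1 else 0)
    (B' := fun _ => 1)
    ((travelTime_continuousOn hab hint).comp (hz.continuousOn.mono fun s hs => hs.1)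
      fun s hs => hz.mem s hs.1)
    (fun s hs => ?_) (by simp [hz.initial]) (continuousOn_const.add continuousOn_id)
    (fun s _ => (hasDerivWithinAt_id s _).const_add _) (fun s _ => by split_ifs <;> norm_num)
    ⟨ht, le_rfl⟩
  split_ifs with hzs
  · exact (hz.hasDerivWithinAt_travelTime_comp hv hv_nonneg hv_pos hint haα hs.1 hzs).mono
      (Ici_subset_Ici.2 hs.1)
  · have hzs : z s = b := le_antisymm (hz.mem s hs.1).2 (not_lt.1 hzs)
    refine (hasDerivWithinAt_const s _ (travelTime v a b)).congr (fun r hr => ?_) (by rw [hzs])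
    rw [hz.eq_right_of_le hv_nonneg hs.1 hr hzs]

theorem travelTime_comp (hv : Continuous v) (hv_nonneg : ∀ x, 0 ≤ v x)
    (hv_pos : ∀ x ∈ Ioo a b, 0 < v x) (hint : IntervalIntegrable (fun s => (v s)⁻¹) volume a b)
    (hz : IsSolution v a b α z) (haα : a < α) {t : ℝ} (ht : 0 ≤ t) :
    travelTime v a (z t) = min (travelTime v a α + t) (travelTime v a b) := by
  have hab : a ≤ b := (hz.mem t ht).1.trans (hz.mem t ht).2
  rcases (hz.mem t ht).2.lt_or_eq with hzt | hzt
  · have h := hz.travelTime_comp_of_lt hv hv_nonneg hv_pos hint haα ht hzt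
    rw [min_eq_left (h ▸ (travelTime_strictMonoOn hv_pos hint (hz.mem t ht)
      (right_mem_Icc.2 hab) hzt).le), h]
  · have h := hz.travelTime_comp_le hv hv_nonneg hv_pos hint haα ht
    rw [hzt] at h ⊢
    rw [min_eq_right h]

theorem eqOn (hv : Continuous v) (hv_nonneg : ∀ x, 0 ≤ v x)
    (hv_pos : ∀ x ∈ Ioo a b, 0 < v x) (hint : IntervalIntegrable (fun s => (v s)⁻¹) volume a b)
    (hz₁ : IsSolution v a b α z) {z₂ : ℝ → ℝ} (hz₂ : IsSolution v a b α z₂)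
    (haα : a < α) : EqOn z z₂ (Ici 0) := fun t ht =>
  (travelTime_strictMonoOn hv_pos hint).injOn (hz₁.mem t ht) (hz₂.mem t ht)
    ((hz₁.travelTime_comp hv hv_nonneg hv_pos hint haα ht).trans
      (hz₂.travelTime_comp hv hv_nonneg hv_pos hint haα ht).symm)

end IsSolution

section Existence

variable {v : ℝ → ℝ} {a b : ℝ}

theorem isSolution_const (hab : a ≤ b) (hva : v a = 0) : IsSolution v a b a fun _ => a where
  mem _ _ := left_mem_Icc.2 hab
  initial := rfl
  hasDerivWithinAt t _ := by rw [hva]; exact hasDerivWithinAt_const t _ a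

theorem exists_isSolution_eq_right (hab : a < b) (hv : Continuous v)
    (hv_pos : ∀ x ∈ Ioo a b, 0 < v x) (hva : v a = 0) (hvb : v b = 0)
    (hint : IntervalIntegrable (fun s => (v s)⁻¹) volume a b) :
    ∃ z, IsSolution v a b a z ∧ ∃ t ∈ Ici 0, z t = b := by
  set T := travelTime v a b
  have hmono := travelTime_strictMonoOn hv_pos hint
  have hT : 0 < T := by
    simpa using hmono (left_mem_Icc.2 hab.le) (right_mem_Icc.2 hab.le) hab
  obtain ⟨z, hz, hzτ⟩ := hmono.exists_continuous_inverse hab.le (travelTime_continuousOn hab.le hint)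
  simp only [travelTime_self] at hzτ
  have hz_eq : ∀ {t x}, x ∈ Icc a b → travelTime v a x = max 0 (min T t) → z t = x :=
    fun hx h => hmono.injOn (hzτ _).1 hx ((hzτ _).2.trans h.symm)
  have hz_left : ∀ t ≤ 0, z t = a := fun t ht =>
    hz_eq (left_mem_Icc.2 hab.le) (by simp [min_eq_right (ht.trans hT.le), ht])
  have hz_right : ∀ t, T ≤ t → z t = b := fun t ht =>
    hz_eq (right_mem_Icc.2 hab.le) (by rw [min_eq_left ht, max_eq_right hT.le])
  have hderiv : ∀ t ∉ ({0, T} : Set ℝ), HasDerivAt z (v (z t)) t := by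
    intro t ht
    simp only [mem_insert_iff, mem_singleton_iff, not_or] at ht
    rcases lt_or_gt_of_ne ht.1 with ht0 | ht0
    · rw [hz_left t ht0.le, hva]
      exact (hasDerivAt_const t a).congr_of_eventuallyEq
        (eventually_of_mem (Iio_mem_nhds ht0) fun s hs => hz_left s (le_of_lt hs))
    rcases lt_or_gt_of_ne ht.2 with htT | htT
    · have hinv : ∀ s ∈ Ioo 0 T, travelTime v a (z s) = s := fun s hs => by
        rw [(hzτ s).2, min_eq_right hs.2.le, max_eq_right hs.1.le]
      have hzt : z t ∈ Ioo a b := by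
        refine ⟨((hzτ t).1.1).lt_of_ne fun h => ?_, ((hzτ t).1.2).lt_of_ne fun h => ?_⟩
        · exact ht0.ne (by simpa [← h] using hinv t ⟨ht0, htT⟩)
        · exact htT.ne' (by simpa [h] using hinv t ⟨ht0, htT⟩)
      exact hasDerivAt_of_travelTime_comp_eventuallyEq hv hv_pos hint hz.continuousAt hzt
        (eventually_of_mem (Ioo_mem_nhds ht0 htT) hinv)
    · rw [hz_right t htT.le, hvb]
      exact (hasDerivAt_const t b).congr_of_eventuallyEq
        (eventually_of_mem (Ioi_mem_nhds htT) fun s hs => hz_right s (le_of_lt hs))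
  refine ⟨z, ⟨fun t _ => (hzτ t).1, hz_left 0 le_rfl, fun t _ => ?_⟩, T, hT.le, hz_right T le_rfl⟩
  exact (hasDerivAt_of_hasDerivAt_of_notMem_finite (toFinite _) hderiv hz
    (hv.comp hz) t).hasDerivWithinAt

end Existence

theorem cauchy_problem_uniqueness_iff (W : ℝ → ℝ) (a b α : ℝ)
    (hab : a < b) (hα : α ∈ Icc a b)
    (hWc : Continuous W) (hWnn : ∀ x, 0 ≤ W x)
    (hzeros : ∀ x, W x = 0 ↔ x = a ∨ x = b)
    (hint : IntervalIntegrable (fun s => (Real.sqrt (W s))⁻¹) volume a b) :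
    (∀ z₁ z₂ : ℝ → ℝ,
      ((∀ t ∈ Ici (0:ℝ), z₁ t ∈ Icc a b) ∧ z₁ 0 = α ∧
        (∀ t ∈ Ici (0:ℝ), HasDerivWithinAt z₁ (Real.sqrt (W (z₁ t))) (Ici 0) t)) →
      ((∀ t ∈ Ici (0:ℝ), z₂ t ∈ Icc a b) ∧ z₂ 0 = α ∧
        (∀ t ∈ Ici (0:ℝ), HasDerivWithinAt z₂ (Real.sqrt (W (z₂ t))) (Ici 0) t)) →
      ∀ t ∈ Ici (0:ℝ), z₁ t = z₂ t) ↔ a < α := by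
  have hv : Continuous fun x => √(W x) := hWc.sqrt
  have hv_pos : ∀ x ∈ Ioo a b, 0 < √(W x) := fun x hx =>
    sqrt_pos.2 <| (hWnn x).lt_of_ne' fun h => by
      rcases (hzeros x).1 h with rfl | rfl
      exacts [lt_irrefl _ hx.1, lt_irrefl _ hx.2]
  have hva : √(W a) = 0 := by rw [(hzeros a).2 (.inl rfl), sqrt_zero]
  have hvb : √(W b) = 0 := by rw [(hzeros b).2 (.inr rfl), sqrt_zero]
  constructor
  · intro huniq
    by_contra! hαa
    obtain rfl : α = a := le_antisymm hαa hα.1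
    obtain ⟨z, hz, t, ht, hzt⟩ := exists_isSolution_eq_right hab hv hv_pos hva hvb hint
    have hc := isSolution_const (v := fun x => √(W x)) hab.le hva
    have := huniq _ z ⟨hc.mem, hc.initial, hc.hasDerivWithinAt⟩
      ⟨hz.mem, hz.initial, hz.hasDerivWithinAt⟩ t ht
    exact hab.ne (this.trans hzt)
  · intro haα z₁ z₂ h₁ h₂
    exact IsSolution.eqOn hv (fun _ => sqrt_nonneg _) hv_pos hint ⟨h₁.1, h₁.2.1, h₁.2.2⟩
      ⟨h₂.1, h₂.2.1, h₂.2.2⟩ haα
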